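/- arXiv:1804.07208 — 3 statements merged into one kernel-verified Lean document; each statement's English description precedes it below -/
import Mathlib

section
/- Let P_n, P be Borel probability measures on ℝ such that P_n(A) → P(A) for every Borel set A. Then the corresponding cumulative distribution functions converge uniformly: sup_t |F_n(t) - F(t)| → 0 as n → ∞. -/
/-!
For every `ε > 0` the half-lines `Iic t` admit finitely many measurable `P`-brackets
`A ⊆ Iic t ⊆ B` with `P (B \ A) ≤ ε`: near a point `b` one may take `Iic (b - δ) ⊆ Iic t ⊆ Iio b`
or `Iic b ⊆ Iic t ⊆ Iio (b + δ)`, whose gaps lie in `Icc (b - δ) (b + δ) \ {b}`, a set of small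
measure by continuity from above; compactness of `Icc a b` and the smallness of the tails of `P`
make finitely many of these suffice. Setwise convergence on the finitely many brackets then
controls `|Pₙ (Iic t) - P (Iic t)|` for all `t` at once.
-/

open MeasureTheory Filter Set Topology

section Bracketing

variable {α ι : Type*} [MeasurableSpace α]

/-- Finiteness of the `ε`-bracketing number of `{C i | i ∈ T}`, as in empirical process theory. -/
def IsBracketedOn (μ : Measure α) (C : ι → Set α) (ε : ℝ) (T : Set ι) : Prop :=
  ∃ S : Set (Set α), S.Finite ∧ (∀ A ∈ S, MeasurableSet A) ∧
    ∀ i ∈ T, ∃ A ∈ S, ∃ B ∈ S, A ⊆ C i ∧ C i ⊆ B ∧ μ.real (B \ A) ≤ ε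

variable {μ : Measure α} {C : ι → Set α} {ε : ℝ} {T T' : Set ι}

lemma isBracketedOn_empty : IsBracketedOn μ C ε ∅ :=
  ⟨∅, finite_empty, by simp, by simp⟩

lemma IsBracketedOn.mono (h : IsBracketedOn μ C ε T) (hT : T' ⊆ T) : IsBracketedOn μ C ε T' :=
  let ⟨S, hS, hmeas, hbr⟩ := h
  ⟨S, hS, hmeas, fun i hi => hbr i (hT hi)⟩

lemma IsBracketedOn.union (h : IsBracketedOn μ C ε T) (h' : IsBracketedOn μ C ε T') :
    IsBracketedOn μ C ε (T ∪ T') := by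
  obtain ⟨S, hS, hmeas, hbr⟩ := h
  obtain ⟨S', hS', hmeas', hbr'⟩ := h'
  refine ⟨S ∪ S', hS.union hS', fun A hA => hA.elim (hmeas A) (hmeas' A), ?_⟩
  rintro i (hi | hi)
  · obtain ⟨A, hA, B, hB, hAB⟩ := hbr i hi
    exact ⟨A, .inl hA, B, .inl hB, hAB⟩
  · obtain ⟨A, hA, B, hB, hAB⟩ := hbr' i hi
    exact ⟨A, .inr hA, B, .inr hB, hAB⟩

lemma IsCompact.isBracketedOn [TopologicalSpace ι] {K : Set ι} (hK : IsCompact K)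
    (h : ∀ x ∈ K, ∃ U ∈ 𝓝 x, IsBracketedOn μ C ε U) : IsBracketedOn μ C ε K :=
  hK.induction_on isBracketedOn_empty (fun _ _ hst ht => ht.mono hst)
    (fun _ _ hs ht => hs.union ht)
    fun x hx => (h x hx).imp fun _ hU => ⟨mem_nhdsWithin_of_mem_nhds hU.1, hU.2⟩

lemma abs_measureReal_sub_le_of_subset_of_subset {ν : Measure α} [IsFiniteMeasure μ]
    [IsFiniteMeasure ν] {A B C : Set α} {δ : ℝ} (hA : MeasurableSet A) (hAC : A ⊆ C)
    (hCB : C ⊆ B) (hνA : |ν.real A - μ.real A| ≤ δ) (hνB : |ν.real B - μ.real B| ≤ δ) :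
    |ν.real C - μ.real C| ≤ δ + μ.real (B \ A) := by
  rw [measureReal_sdiff (hAC.trans hCB) hA]
  have := measureReal_mono (μ := ν) hAC
  have := measureReal_mono (μ := ν) hCB
  have := measureReal_mono (μ := μ) hAC
  have := measureReal_mono (μ := μ) hCB
  rw [abs_le] at *
  constructor <;> linarith

theorem tendsto_iSup_abs_measureReal_sub_of_isBracketedOn {κ : Type*} {μs : κ → Measure α}
    [∀ n, IsFiniteMeasure (μs n)] [IsFiniteMeasure μ] {l : Filter κ}
    (hC : ∀ ε > 0, IsBracketedOn μ C ε univ)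
    (h : ∀ A, MeasurableSet A → Tendsto (fun n => (μs n).real A) l (𝓝 (μ.real A))) :
    Tendsto (fun n => ⨆ i, |(μs n).real (C i) - μ.real (C i)|) l (𝓝 0) := by
  refine tendsto_order.2 ⟨fun a ha => Eventually.of_forall fun n =>
    ha.trans_le (Real.iSup_nonneg fun _ => abs_nonneg _), fun ε hε => ?_⟩
  obtain ⟨S, hS, hmeas, hbr⟩ := hC (ε / 3) (by positivity)
  have hclose : ∀ᶠ n in l, ∀ A ∈ S, |(μs n).real A - μ.real A| < ε / 3 :=
    (eventually_all_finite hS).2 fun A hA => by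
      simpa only [Real.dist_eq] using Metric.tendsto_nhds.1 (h A (hmeas A hA)) _ (by positivity)
  filter_upwards [hclose] with n hn
  refine (Real.iSup_le (fun i => ?_) (by positivity)).trans_lt (by linarith : 2 * ε / 3 < ε)
  obtain ⟨A, hA, B, hB, hAC, hCB, hBA⟩ := hbr i trivial
  calc |(μs n).real (C i) - μ.real (C i)| ≤ ε / 3 + μ.real (B \ A) :=
        abs_measureReal_sub_le_of_subset_of_subset (hmeas A hA) hAC hCB (hn A hA).le (hn B hB).le
    _ ≤ 2 * ε / 3 := by linarith

end Bracketing

section Real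

variable (μ : Measure ℝ) [IsFiniteMeasure μ] {ε : ℝ}

lemma exists_isBracketedOn_Iic_Iio (hε : 0 < ε) : ∃ a, IsBracketedOn μ Iic ε (Iio a) := by
  have hlim : Tendsto (fun a => μ.real (Iio a)) atBot (𝓝 0) := by
    have := tendsto_measure_iInter_atBot (μ := μ) (fun a => measurableSet_Iio.nullMeasurableSet)
      monotone_Iio ⟨0, measure_ne_top μ _⟩
    rw [show ⋂ a : ℝ, Iio a = ∅ from
      eq_empty_of_forall_notMem fun x hx => lt_irrefl x (mem_iInter.1 hx x), measure_empty] at this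
    exact (ENNReal.tendsto_toReal ENNReal.zero_ne_top).comp this
  obtain ⟨a, ha⟩ := (hlim.eventually (eventually_le_nhds hε)).exists
  refine ⟨a, {∅, Iio a}, toFinite _, by simp, fun t ht => ⟨∅, by simp, Iio a, by simp,
    empty_subset _, Iic_subset_Iio.2 ht, by simpa using ha⟩⟩

lemma exists_isBracketedOn_Iic_Ici (hε : 0 < ε) : ∃ b, IsBracketedOn μ Iic ε (Ici b) := by
  have hlim : Tendsto (fun b => μ.real (Ioi b)) atTop (𝓝 0) := by
    have := tendsto_measure_iInter_atTop (μ := μ) (fun b => measurableSet_Ioi.nullMeasurableSet)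
      antitone_Ioi ⟨0, measure_ne_top μ _⟩
    rw [show ⋂ a : ℝ, Ioi a = ∅ from
      eq_empty_of_forall_notMem fun x hx => lt_irrefl x (mem_iInter.1 hx x), measure_empty] at this
    exact (ENNReal.tendsto_toReal ENNReal.zero_ne_top).comp this
  obtain ⟨b, hb⟩ := (hlim.eventually (eventually_le_nhds hε)).exists
  refine ⟨b, {Iic b, univ}, toFinite _, by simp, fun t ht => ⟨Iic b, by simp, univ, by simp,
    Iic_subset_Iic.2 ht, subset_univ _, by rwa [← compl_eq_univ_sdiff, compl_Iic]⟩⟩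

lemma exists_isBracketedOn_Iic_nhds (hε : 0 < ε) (b : ℝ) :
    ∃ U ∈ 𝓝 b, IsBracketedOn μ Iic ε U := by
  have hlim : Tendsto (fun δ => μ.real (Icc (b - δ) (b + δ))) (𝓝[>] 0) (𝓝 (μ.real {b})) :=
    (ENNReal.tendsto_toReal (measure_ne_top μ _)).comp (tendsto_measure_Icc_nhdsWithin_right' μ b)
  obtain ⟨δ, hδ, hδ0⟩ := ((hlim.eventually (eventually_le_nhds (lt_add_of_pos_right _ hε))).and
    self_mem_nhdsWithin).exists
  have hpunct : μ.real (Icc (b - δ) (b + δ) \ {b}) ≤ ε := by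
    rw [measureReal_sdiff (by simpa using hδ0.le) (measurableSet_singleton b)]
    linarith
  refine ⟨Ioo (b - δ) (b + δ), Ioo_mem_nhds (by linarith) (by linarith),
    {Iic (b - δ), Iio b, Iic b, Iio (b + δ)}, toFinite _, by simp, fun t ⟨ht₁, ht₂⟩ => ?_⟩
  rcases lt_or_ge t b with htb | hbt
  · refine ⟨Iic (b - δ), by simp, Iio b, by simp, Iic_subset_Iic.2 ht₁.le, Iic_subset_Iio.2 htb,
      (measureReal_mono fun x hx => ?_).trans hpunct⟩
    simp only [Set.mem_sdiff, mem_Iio, mem_Iic, not_le] at hx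
    obtain ⟨hx₁, hx₂⟩ := hx
    exact ⟨⟨hx₂.le, by linarith⟩, hx₁.ne⟩
  · refine ⟨Iic b, by simp, Iio (b + δ), by simp, Iic_subset_Iic.2 hbt, Iic_subset_Iio.2 ht₂,
      (measureReal_mono fun x hx => ?_).trans hpunct⟩
    simp only [Set.mem_sdiff, mem_Iio, mem_Iic, not_le] at hx
    obtain ⟨hx₁, hx₂⟩ := hx
    exact ⟨⟨by linarith, hx₁.le⟩, hx₂.ne'⟩

lemma isBracketedOn_Iic_univ (hε : 0 < ε) : IsBracketedOn μ Iic ε univ := by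
  obtain ⟨a, ha⟩ := exists_isBracketedOn_Iic_Iio μ hε
  obtain ⟨b, hb⟩ := exists_isBracketedOn_Iic_Ici μ hε
  have hab : IsBracketedOn μ Iic ε (Icc a b) :=
    isCompact_Icc.isBracketedOn fun t _ => exists_isBracketedOn_Iic_nhds μ hε t
  refine ((ha.union hab).union hb).mono fun t _ => ?_
  rcases lt_or_ge t a with hta | hat
  · exact .inl (.inl hta)
  rcases le_or_gt b t with hbt | htb
  · exact .inr hbt
  · exact .inl (.inr ⟨hat, htb.le⟩)

end Real

/-- If Borel probability measures `Pₙ` on ℝ converge setwise to `P`, then the corresponding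
cumulative distribution functions converge uniformly. -/
theorem stmt7
    (Ps : ℕ → Measure ℝ) (P : Measure ℝ)
    [∀ n, IsProbabilityMeasure (Ps n)] [IsProbabilityMeasure P]
    (hsetwise : ∀ A : Set ℝ, MeasurableSet A →
      Tendsto (fun n => (Ps n A).toReal) atTop (nhds (P A).toReal)) :
    Tendsto (fun n => ⨆ t : ℝ, |(Ps n (Set.Iic t)).toReal - (P (Set.Iic t)).toReal|)
      atTop (nhds 0) :=
  tendsto_iSup_abs_measureReal_sub_of_isBracketedOn (fun _ hε => isBracketedOn_Iic_univ P hε)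
    hsetwise
end

section
/- Consider the fitness model where at odd times X_{k+1} species are created with i.i.d. fitness values drawn from a probability measure μ on [0,1], and at even times Y_{k+1} species with the lowest fitness are removed, with {(X_n, Y_n)} i.i.d., 0 < E[Y] < E[X] < ∞. Let f_c = inf{f : F(f) > E[Y]/E[X]} where F is the c.d.f. of μ. Then for every f with E[F(f)X - Y] > 0, the number Z_n([0,f]) of living species with fitness in [0,f] tends to infinity almost surely. -/
open MeasureTheory ProbabilityTheory Filter

/-- Index type for the driving randomness of the fitness model: `inl n` indexes the pair
`(Xₙ, Yₙ)` of birth/death counts and `inr (n, i)` indexes the fitness of the `i`-th species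
created at stage `n`. -/
def fitnessModelType : (ℕ ⊕ ℕ × ℕ) → Type
  | .inl _ => ℕ × ℕ
  | .inr _ => ℝ

def fitnessModelSpace : ∀ j : ℕ ⊕ ℕ × ℕ, MeasurableSpace (fitnessModelType j)
  | .inl _ => (inferInstance : MeasurableSpace (ℕ × ℕ))
  | .inr _ => (inferInstance : MeasurableSpace ℝ)

/-- The joint family of birth/death counts and fitness values. -/
def fitnessModelFam {Ω : Type*} (X Y : ℕ → Ω → ℕ) (U : ℕ → ℕ → Ω → ℝ) :
    ∀ j : ℕ ⊕ ℕ × ℕ, Ω → fitnessModelType j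
  | .inl n => fun ω => (X n ω, Y n ω)
  | .inr p => U p.1 p.2

open Finset
open scoped ENNReal Function

/-!
The stage data `((Xₙ, Yₙ), (Uₙᵢ)ᵢ)` are independent across stages, each with law
`law(X, Y) ⊗ μ^ℕ`. So the increments `X̃ₙ - Yₙ`, where `X̃ₙ` counts the newborn species of
fitness `≤ f`, are i.i.d. with mean `F(f) E[X] - E[Y] > 0`, and by the strong law of large
numbers their partial sums tend to `+∞` almost surely. Removing the least fit species first
makes `Z_{2k}([0,f])` a queue reflected at `0`, which dominates the `k`-th partial sum.
-/

theorem tendsto_atTop_of_reflected_walk {Z : ℕ → ℤ} {a b : ℕ → ℕ} (h0 : 0 ≤ Z 0)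
    (hodd : ∀ k, Z (2 * k + 1) = Z (2 * k) + a k)
    (heven : ∀ k, Z (2 * k + 2) = max 0 (Z (2 * k + 1) - b k))
    (hS : Tendsto (fun k => ∑ i ∈ range k, ((a i : ℤ) - b i)) atTop atTop) :
    Tendsto Z atTop atTop := by
  have hsum_le_even : ∀ k, ∑ i ∈ range k, ((a i : ℤ) - b i) ≤ Z (2 * k) := by
    intro k
    induction k with
    | zero => simpa using h0
    | succ k ih =>
      rw [sum_range_succ, show 2 * (k + 1) = 2 * k + 2 by ring, heven, hodd]
      exact le_max_of_le_right (by linarith)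
  have hle : ∀ n, ∑ i ∈ range (n / 2), ((a i : ℤ) - b i) ≤ Z n := by
    intro n
    obtain ⟨k, rfl | rfl⟩ := Nat.even_or_odd' n
    · simpa using hsum_le_even k
    · rw [hodd, show (2 * k + 1) / 2 = k by omega]
      exact (hsum_le_even k).trans (by simp)
  exact tendsto_atTop_mono hle (hS.comp (Nat.tendsto_div_const_atTop two_ne_zero))

theorem ae_tendsto_sum_atTop_of_integral_pos {Ω : Type*} [MeasurableSpace Ω] {P : Measure Ω}
    {W : ℕ → Ω → ℝ} {V : Ω → ℝ} (hident : ∀ n, IdentDistrib (W n) V P P)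
    (hindep : Pairwise ((· ⟂ᵢ[P] ·) on W)) (hint : Integrable V P) (hpos : 0 < ∫ ω, V ω ∂P) :
    ∀ᵐ ω ∂P, Tendsto (fun n => ∑ i ∈ range n, W i ω) atTop atTop := by
  have hW0 : ∫ ω, W 0 ω ∂P = ∫ ω, V ω ∂P := (hident 0).integral_eq
  have hslln := strong_law_ae_real W ((hident 0).integrable_iff.mpr hint) hindep
    fun n => (hident n).trans (hident 0).symm
  filter_upwards [hslln] with ω hω
  rw [hW0] at hω
  refine (hω.pos_mul_atTop hpos tendsto_natCast_atTop_atTop).congr' ?_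
  filter_upwards [eventually_ne_atTop 0] with n hn
  exact div_mul_cancel₀ _ (Nat.cast_ne_zero.mpr hn)

theorem integral_natCast_eq_toReal_lintegral {Ω : Type*} [MeasurableSpace Ω] {P : Measure Ω}
    {V : Ω → ℕ} (hV : Measurable V) :
    ∫ ω, (V ω : ℝ) ∂P = (∫⁻ ω, (V ω : ℝ≥0∞) ∂P).toReal := by
  rw [integral_eq_lintegral_of_nonneg_ae (.of_forall fun _ => Nat.cast_nonneg _)
    (measurable_from_top.comp hV).aestronglyMeasurable]
  simp_rw [ENNReal.ofReal_natCast]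

theorem indepFun_of_measurable_biSup {Ω ι β γ : Type*} {mΩ : MeasurableSpace Ω}
    [MeasurableSpace β] [MeasurableSpace γ] {P : Measure Ω} {m : ι → MeasurableSpace Ω}
    (h_le : ∀ i, m i ≤ mΩ) (h_indep : iIndep m P) {S T : Set ι} (hST : Disjoint S T)
    {g : Ω → β} {h : Ω → γ} (hg : Measurable[⨆ i ∈ S, m i] g)
    (hh : Measurable[⨆ i ∈ T, m i] h) : g ⟂ᵢ[P] h :=
  indep_of_indep_of_le_right (indep_of_indep_of_le_left (indep_iSup_of_disjoint h_le h_indep hST)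
    hg.comap_le) hh.comap_le

namespace FitnessModel

def stageData {Ω : Type*} (X Y : ℕ → Ω → ℕ) (U : ℕ → ℕ → Ω → ℝ) (n : ℕ) (ω : Ω) :
    (ℕ × ℕ) × (ℕ → ℝ) :=
  ((X n ω, Y n ω), fun i => U n i ω)

noncomputable def thinnedCount (f : ℝ) (s : (ℕ × ℕ) × (ℕ → ℝ)) : ℕ :=
  #{i ∈ range s.1.1 | s.2 i ≤ f}

noncomputable def increment (f : ℝ) (s : (ℕ × ℕ) × (ℕ → ℝ)) : ℝ :=
  thinnedCount f s - s.1.2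

def stageIndex : ℕ ⊕ ℕ × ℕ → ℕ := Sum.elim id Prod.fst

theorem measurable_thinnedCount (f : ℝ) : Measurable (thinnedCount f) := by
  refine measurable_from_prod_countable_right fun q => ?_
  simp only [thinnedCount, card_filter]
  exact Finset.measurable_sum _ fun i _ =>
    Measurable.ite (measurableSet_le (measurable_pi_apply i) measurable_const)
      measurable_const measurable_const

theorem thinnedCount_le (f : ℝ) (s : (ℕ × ℕ) × (ℕ → ℝ)) : thinnedCount f s ≤ s.1.1 :=
  (card_filter_le _ _).trans (card_range _).le

theorem measurable_increment (f : ℝ) : Measurable (increment f) :=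
  (measurable_from_top.comp (measurable_thinnedCount f)).sub
    (measurable_from_top.comp (measurable_snd.comp measurable_fst))

theorem lintegral_thinnedCount_infinitePi (f : ℝ) (μ : Measure ℝ) [IsProbabilityMeasure μ]
    (q : ℕ × ℕ) :
    ∫⁻ u, (thinnedCount f (q, u) : ℝ≥0∞) ∂Measure.infinitePi (fun _ => μ) =
      μ (Set.Iic f) * q.1 := by
  have hcoord : ∀ i : ℕ,
      ∫⁻ u, (Set.Iic f).indicator 1 (u i) ∂Measure.infinitePi (fun _ => μ) = μ (Set.Iic f) := by
    intro i
    rw [← lintegral_map (measurable_one.indicator measurableSet_Iic) (measurable_pi_apply i),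
      Measure.infinitePi_map_eval, lintegral_indicator_one measurableSet_Iic]
  have hcount : ∀ u : ℕ → ℝ,
      (thinnedCount f (q, u) : ℝ≥0∞) = ∑ i ∈ range q.1, (Set.Iic f).indicator 1 (u i) := by
    intro u
    rw [thinnedCount, card_filter, Nat.cast_sum]
    refine sum_congr rfl fun i _ => ?_
    by_cases h : u i ≤ f <;> simp [h]
  simp_rw [hcount]
  rw [lintegral_finsetSum (f := fun (i : ℕ) (u : ℕ → ℝ) => (Set.Iic f).indicator 1 (u i)) _
    fun i _ => (measurable_one.indicator measurableSet_Iic).comp (measurable_pi_apply i)]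
  simp [hcoord, mul_comm]

theorem lintegral_thinnedCount_prod_infinitePi (f : ℝ) (ν : Measure (ℕ × ℕ)) [SFinite ν]
    (μ : Measure ℝ) [IsProbabilityMeasure μ] :
    ∫⁻ s, (thinnedCount f s : ℝ≥0∞) ∂(ν.prod (Measure.infinitePi fun _ => μ)) =
      μ (Set.Iic f) * ∫⁻ q, (q.1 : ℝ≥0∞) ∂ν := by
  rw [lintegral_prod (fun s => (thinnedCount f s : ℝ≥0∞))
    (measurable_from_top.comp (measurable_thinnedCount f)).aemeasurable]
  simp_rw [lintegral_thinnedCount_infinitePi]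
  exact lintegral_const_mul _ (measurable_from_top.comp measurable_fst)

section Independence

variable {Ω : Type*} {X Y : ℕ → Ω → ℕ} {U : ℕ → ℕ → Ω → ℝ}

abbrev coordSigma (X Y : ℕ → Ω → ℕ) (U : ℕ → ℕ → Ω → ℝ) (j : ℕ ⊕ ℕ × ℕ) :
    MeasurableSpace Ω :=
  (fitnessModelSpace j).comap (fitnessModelFam X Y U j)

theorem coordSigma_le [MeasurableSpace Ω] (hXm : ∀ n, Measurable (X n))
    (hYm : ∀ n, Measurable (Y n)) (hUm : ∀ n i, Measurable (U n i)) (j : ℕ ⊕ ℕ × ℕ) :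
    coordSigma X Y U j ≤ ‹MeasurableSpace Ω› := by
  rcases j with n | ⟨n, i⟩
  · exact ((hXm n).prodMk (hYm n)).comap_le
  · exact (hUm n i).comap_le

theorem measurable_fitnessModelFam_biSup {S : Set (ℕ ⊕ ℕ × ℕ)} {j : ℕ ⊕ ℕ × ℕ} (hj : j ∈ S) :
    @Measurable Ω _ (⨆ j ∈ S, coordSigma X Y U j) (fitnessModelSpace j)
      (fitnessModelFam X Y U j) :=
  (comap_measurable _).mono (le_biSup (coordSigma X Y U) hj) le_rfl

theorem measurable_pair_biSup {S : Set (ℕ ⊕ ℕ × ℕ)} {n : ℕ} (hn : .inl n ∈ S) :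
    Measurable[⨆ j ∈ S, coordSigma X Y U j] fun ω => (X n ω, Y n ω) :=
  measurable_fitnessModelFam_biSup hn

theorem measurable_fitness_biSup {S : Set (ℕ ⊕ ℕ × ℕ)} {n : ℕ} (hn : ∀ i, .inr (n, i) ∈ S) :
    Measurable[⨆ j ∈ S, coordSigma X Y U j] fun ω i => U n i ω :=
  @measurable_pi_lambda Ω ℕ (fun _ => ℝ) (⨆ j ∈ S, coordSigma X Y U j) _ _
    fun i => measurable_fitnessModelFam_biSup (hn i)

theorem measurable_stageData_biSup (n : ℕ) :
    Measurable[⨆ j ∈ stageIndex ⁻¹' {n}, coordSigma X Y U j] (stageData X Y U n) :=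
  (measurable_pair_biSup (S := stageIndex ⁻¹' {n}) rfl).prodMk
    (measurable_fitness_biSup fun _ => rfl)

variable [MeasurableSpace Ω] {P : Measure Ω}

theorem measurable_stageData (hXm : ∀ n, Measurable (X n)) (hYm : ∀ n, Measurable (Y n))
    (hUm : ∀ n i, Measurable (U n i)) (n : ℕ) : Measurable (stageData X Y U n) :=
  ((hXm n).prodMk (hYm n)).prodMk (measurable_pi_lambda _ (hUm n))

theorem indepFun_stageData (hXm : ∀ n, Measurable (X n)) (hYm : ∀ n, Measurable (Y n))
    (hUm : ∀ n i, Measurable (U n i))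
    (hindep : iIndepFun (m := fitnessModelSpace) (fitnessModelFam X Y U) P) {m n : ℕ}
    (hmn : m ≠ n) : stageData X Y U m ⟂ᵢ[P] stageData X Y U n :=
  indepFun_of_measurable_biSup (coordSigma_le hXm hYm hUm) hindep.iIndep
    ((Set.disjoint_singleton.mpr hmn).preimage _) (measurable_stageData_biSup m)
    (measurable_stageData_biSup n)

theorem map_stageData [IsProbabilityMeasure P] (hXm : ∀ n, Measurable (X n))
    (hYm : ∀ n, Measurable (Y n)) (hUm : ∀ n i, Measurable (U n i))
    (hindep : iIndepFun (m := fitnessModelSpace) (fitnessModelFam X Y U) P)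
    {μ : Measure ℝ} (hU : ∀ n i, P.map (U n i) = μ) (n : ℕ) :
    P.map (stageData X Y U n) =
      (P.map fun ω => (X n ω, Y n ω)).prod (Measure.infinitePi fun _ => μ) := by
  have hpair : (fun ω => (X n ω, Y n ω)) ⟂ᵢ[P] fun ω i => U n i ω :=
    indepFun_of_measurable_biSup (coordSigma_le hXm hYm hUm) hindep.iIndep
      (S := {.inl n}) (T := Set.range fun i => .inr (n, i)) (by simp)
      (measurable_pair_biSup rfl) (measurable_fitness_biSup fun i => ⟨i, rfl⟩)
  have hfitness : iIndepFun (U n) P :=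
    hindep.precomp (g := fun i => .inr (n, i)) fun i j h => by simpa using h
  change P.map (fun ω => ((X n ω, Y n ω), fun i => U n i ω)) = _
  rw [(indepFun_iff_map_prod_eq_prod_map_map ((hXm n).prodMk (hYm n)).aemeasurable
    (measurable_pi_lambda _ (hUm n)).aemeasurable).mp hpair,
    hfitness.map_fun_eq_infinitePi_map (hUm n)]
  simp_rw [hU]

theorem identDistrib_stageData [IsProbabilityMeasure P] (hXm : ∀ n, Measurable (X n))
    (hYm : ∀ n, Measurable (Y n)) (hUm : ∀ n i, Measurable (U n i))
    (hindep : iIndepFun (m := fitnessModelSpace) (fitnessModelFam X Y U) P)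
    (hid : ∀ n, IdentDistrib (fun ω => (X n ω, Y n ω)) (fun ω => (X 0 ω, Y 0 ω)) P P)
    {μ : Measure ℝ} (hU : ∀ n i, P.map (U n i) = μ) (n : ℕ) :
    IdentDistrib (stageData X Y U n) (stageData X Y U 0) P P where
  aemeasurable_fst := (measurable_stageData hXm hYm hUm n).aemeasurable
  aemeasurable_snd := (measurable_stageData hXm hYm hUm 0).aemeasurable
  map_eq := by
    rw [map_stageData hXm hYm hUm hindep hU, map_stageData hXm hYm hUm hindep hU, (hid n).map_eq]

theorem lintegral_thinnedCount_stageData [IsProbabilityMeasure P] (hXm : ∀ n, Measurable (X n))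
    (hYm : ∀ n, Measurable (Y n)) (hUm : ∀ n i, Measurable (U n i))
    (hindep : iIndepFun (m := fitnessModelSpace) (fitnessModelFam X Y U) P)
    {μ : Measure ℝ} [IsProbabilityMeasure μ] (hU : ∀ n i, P.map (U n i) = μ) (f : ℝ) (n : ℕ) :
    ∫⁻ ω, (thinnedCount f (stageData X Y U n ω) : ℝ≥0∞) ∂P =
      μ (Set.Iic f) * ∫⁻ ω, (X n ω : ℝ≥0∞) ∂P := by
  rw [← lintegral_map (f := fun s => (thinnedCount f s : ℝ≥0∞))
      (measurable_from_top.comp (measurable_thinnedCount f)) (measurable_stageData hXm hYm hUm n),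
    map_stageData hXm hYm hUm hindep hU, lintegral_thinnedCount_prod_infinitePi,
    lintegral_map (f := fun q : ℕ × ℕ => (q.1 : ℝ≥0∞)) (measurable_from_top.comp measurable_fst)
      ((hXm n).prodMk (hYm n))]

theorem integrable_thinnedCount_stageData (hXm : ∀ n, Measurable (X n))
    (hYm : ∀ n, Measurable (Y n)) (hUm : ∀ n i, Measurable (U n i)) (f : ℝ) {n : ℕ}
    (hXint : Integrable (fun ω => (X n ω : ℝ)) P) :
    Integrable (fun ω => (thinnedCount f (stageData X Y U n ω) : ℝ)) P :=
  hXint.mono (measurable_from_top.comp ((measurable_thinnedCount f).comp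
      (measurable_stageData hXm hYm hUm n))).aestronglyMeasurable
    (.of_forall fun ω => by
      simp only [Real.norm_natCast, Nat.cast_le]
      exact thinnedCount_le f _)

theorem integral_thinnedCount_stageData [IsProbabilityMeasure P] (hXm : ∀ n, Measurable (X n))
    (hYm : ∀ n, Measurable (Y n)) (hUm : ∀ n i, Measurable (U n i))
    (hindep : iIndepFun (m := fitnessModelSpace) (fitnessModelFam X Y U) P)
    {μ : Measure ℝ} [IsProbabilityMeasure μ] (hU : ∀ n i, P.map (U n i) = μ) (f : ℝ) (n : ℕ) :
    ∫ ω, (thinnedCount f (stageData X Y U n ω) : ℝ) ∂P =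
      (μ (Set.Iic f)).toReal * ∫ ω, (X n ω : ℝ) ∂P := by
  rw [integral_natCast_eq_toReal_lintegral (V := fun ω => thinnedCount f (stageData X Y U n ω))
      ((measurable_thinnedCount f).comp (measurable_stageData hXm hYm hUm n)),
    integral_natCast_eq_toReal_lintegral (hXm n),
    lintegral_thinnedCount_stageData hXm hYm hUm hindep hU, ENNReal.toReal_mul]

end Independence

end FitnessModel

open FitnessModel in
theorem stmt18_general
    {Ω : Type*} [MeasurableSpace Ω] (P : Measure Ω) [IsProbabilityMeasure P]
    (μ : Measure ℝ) [IsProbabilityMeasure μ]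
    (X Y : ℕ → Ω → ℕ) (U : ℕ → ℕ → Ω → ℝ)
    (hXm : ∀ n, Measurable (X n)) (hYm : ∀ n, Measurable (Y n))
    (hUm : ∀ n i, Measurable (U n i))
    -- the pairs (Xₙ, Yₙ) and all fitness values Uₙᵢ are jointly independent
    (hindep : iIndepFun (m := fitnessModelSpace) (fitnessModelFam X Y U) P)
    -- the pairs (Xₙ, Yₙ) are identically distributed
    (hid : ∀ n, IdentDistrib (fun ω => (X n ω, Y n ω)) (fun ω => (X 0 ω, Y 0 ω)) P P)
    -- every fitness value has law μ
    (hU : ∀ n i, P.map (U n i) = μ)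
    -- 0 < E[Y] < E[X] < ∞
    (hXint : Integrable (fun ω => (X 0 ω : ℝ)) P)
    (hYint : Integrable (fun ω => (Y 0 ω : ℝ)) P)
    (f : ℝ)
    -- E[F(f)·X - Y] > 0, where F(f) = μ([0,f]) = μ((-∞,f]) since μ lives on [0,1]
    (hf : 0 < (μ (Set.Iic f)).toReal * ∫ ω, (X 0 ω : ℝ) ∂P - ∫ ω, (Y 0 ω : ℝ) ∂P)
    -- number of species created at stage n with fitness ≤ f
    (Xt : ℕ → Ω → ℕ)
    (hXt : ∀ n ω, Xt n ω = ((Finset.range (X n ω)).filter (fun i => U n i ω ≤ f)).card)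
    -- Z n ω = Z_n([0,f]), the number of living species with fitness in [0,f] at time n:
    -- at odd times the new species with fitness ≤ f are added; at even times Y_{k+1}
    -- least-fit species are removed, which removes species from [0,f] first
    (Z : ℕ → Ω → ℤ)
    (hZ0 : ∀ ω, Z 0 ω = 0)
    (hZodd : ∀ k ω, Z (2 * k + 1) ω = Z (2 * k) ω + (Xt (k + 1) ω : ℤ))
    (hZeven : ∀ k ω, Z (2 * k + 2) ω = max 0 (Z (2 * k + 1) ω - (Y (k + 1) ω : ℤ))) :
    ∀ᵐ ω ∂P, Tendsto (fun n => Z n ω) atTop atTop := by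
  have hstage := identDistrib_stageData hXm hYm hUm hindep hid hU
  have hV : Integrable (increment f ∘ stageData X Y U 0) P :=
    (integrable_thinnedCount_stageData hXm hYm hUm f hXint).sub hYint
  have hmean : ∫ ω, increment f (stageData X Y U 0 ω) ∂P =
      (μ (Set.Iic f)).toReal * ∫ ω, (X 0 ω : ℝ) ∂P - ∫ ω, (Y 0 ω : ℝ) ∂P := by
    rw [← integral_thinnedCount_stageData hXm hYm hUm hindep hU f 0,
      ← integral_sub (integrable_thinnedCount_stageData hXm hYm hUm f hXint) hYint]
    rfl
  have hsum := ae_tendsto_sum_atTop_of_integral_pos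
    (W := fun n => increment f ∘ stageData X Y U (n + 1))
    (fun n => (hstage (n + 1)).comp (measurable_increment f))
    (fun m n hmn => (indepFun_stageData hXm hYm hUm hindep (by simpa using hmn)).comp
      (measurable_increment f) (measurable_increment f))
    hV (hmean ▸ hf)
  filter_upwards [hsum] with ω hω
  refine tendsto_atTop_of_reflected_walk (hZ0 ω).ge (hZodd · ω) (hZeven · ω) ?_
  rw [← tendsto_intCast_atTop_iff (R := ℝ)]
  convert hω using 2 with k
  simp only [Int.cast_sum, Int.cast_sub, Int.cast_natCast, Function.comp_apply, increment, hXt]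
  rfl

/-- In the fitness model (births `X_{k+1}` at odd times with i.i.d. fitness drawn from `μ`,
deaths of the `Y_{k+1}` least-fit species at even times, `0 < E[Y] < E[X] < ∞`), if
`E[F(f)·X - Y] > 0`, then the number of living species with fitness in `[0, f]` tends to
infinity almost surely. -/
theorem stmt18
    {Ω : Type*} [MeasurableSpace Ω] (P : Measure Ω) [IsProbabilityMeasure P]
    (μ : Measure ℝ) [IsProbabilityMeasure μ] (hμsupp : μ (Set.Icc (0 : ℝ) 1) = 1)
    (X Y : ℕ → Ω → ℕ) (U : ℕ → ℕ → Ω → ℝ)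
    (hXm : ∀ n, Measurable (X n)) (hYm : ∀ n, Measurable (Y n))
    (hUm : ∀ n i, Measurable (U n i))
    -- the pairs (Xₙ, Yₙ) and all fitness values Uₙᵢ are jointly independent
    (hindep : iIndepFun (m := fitnessModelSpace) (fitnessModelFam X Y U) P)
    -- the pairs (Xₙ, Yₙ) are identically distributed
    (hid : ∀ n, IdentDistrib (fun ω => (X n ω, Y n ω)) (fun ω => (X 0 ω, Y 0 ω)) P P)
    -- every fitness value has law μ
    (hU : ∀ n i, P.map (U n i) = μ)
    -- 0 < E[Y] < E[X] < ∞
    (hXint : Integrable (fun ω => (X 0 ω : ℝ)) P)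
    (hYint : Integrable (fun ω => (Y 0 ω : ℝ)) P)
    (hYpos : 0 < ∫ ω, (Y 0 ω : ℝ) ∂P)
    (hYX : ∫ ω, (Y 0 ω : ℝ) ∂P < ∫ ω, (X 0 ω : ℝ) ∂P)
    (f : ℝ)
    -- E[F(f)·X - Y] > 0, where F(f) = μ([0,f]) = μ((-∞,f]) since μ lives on [0,1]
    (hf : 0 < (μ (Set.Iic f)).toReal * ∫ ω, (X 0 ω : ℝ) ∂P - ∫ ω, (Y 0 ω : ℝ) ∂P)
    -- number of species created at stage n with fitness ≤ f
    (Xt : ℕ → Ω → ℕ)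
    (hXt : ∀ n ω, Xt n ω = ((Finset.range (X n ω)).filter (fun i => U n i ω ≤ f)).card)
    -- Z n ω = Z_n([0,f]), the number of living species with fitness in [0,f] at time n:
    -- at odd times the new species with fitness ≤ f are added; at even times Y_{k+1}
    -- least-fit species are removed, which removes species from [0,f] first
    (Z : ℕ → Ω → ℤ)
    (hZ0 : ∀ ω, Z 0 ω = 0)
    (hZodd : ∀ k ω, Z (2 * k + 1) ω = Z (2 * k) ω + (Xt (k + 1) ω : ℤ))
    (hZeven : ∀ k ω, Z (2 * k + 2) ω = max 0 (Z (2 * k + 1) ω - (Y (k + 1) ω : ℤ))) :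
    ∀ᵐ ω ∂P, Tendsto (fun n => Z n ω) atTop atTop :=
  stmt18_general P μ X Y U hXm hYm hUm hindep hid hU hXint hYint f hf Xt hXt Z hZ0 hZodd hZeven
end

section
/- In the fitness model with E[X - Y] ∈ (0, ∞) and i.i.d. fitness values with law μ on [0,1], almost surely Z_n / n → E[X - Y]/2 as n → ∞, and for every left interval I = [0,f], almost surely Z_n(I)/n → max(E[μ(I)X - Y], 0)/2. -/
/-!
Write `W k` for the number of living species after the `k`-th deletion. It obeys Lindley's
recursion `W (k + 1) = max 0 (W k + ξ (k + 1))` with `ξ = (number created) - Y`, whose solution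
is `S k - min_{j ≤ k} S j` for the random walk `S` of the `ξ`; so `S k / k → m` forces
`W k / k → max m 0`, and the creation step in between changes this only by `o(k)`.
The strong law gives `m`: the randomness `((Xₙ, Yₙ), (Uₙᵢ)ᵢ)` of the different cycles lives on
disjoint blocks of the independent family, and each has law `law(X₀, Y₀) ⊗ μ^ℕ`, so the
increments are i.i.d.; by Fubini the number of new species with fitness `≤ f` has mean
`μ(Iic f) · E X`.
-/

open MeasureTheory ProbabilityTheory Filter

open Finset Topology

theorem lindley_eq_add_partialSups (ξ W : ℕ → ℝ) (h0 : W 0 = 0)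
    (hrec : ∀ k, W (k + 1) = max 0 (W k + ξ (k + 1))) (k : ℕ) :
    W k = (∑ i ∈ range k, ξ (i + 1))
      + partialSups (fun j => -∑ i ∈ range j, ξ (i + 1)) k := by
  induction k with
  | zero => simp [h0]
  | succ k ih =>
    rw [hrec, ih, partialSups_add_one, sum_range_succ, add_max, add_neg_cancel, max_comm]
    ring_nf

theorem tendsto_partialSups_div {b : ℕ → ℝ} {c : ℝ} (h0 : b 0 = 0)
    (h : Tendsto (fun k : ℕ => b k / k) atTop (𝓝 c)) :
    Tendsto (fun k : ℕ => partialSups b k / k) atTop (𝓝 (max c 0)) := by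
  refine tendsto_order.2 ⟨fun a ha => ?_, fun a ha => ?_⟩
  · filter_upwards [(h.max tendsto_const_nhds).eventually_const_lt ha] with k hk
    refine hk.trans_le (max_le ?_ ?_)
    · gcongr
      exact le_partialSups b k
    · have := h0 ▸ le_partialSups_of_le b (Nat.zero_le k)
      positivity
  · obtain ⟨δ, hcδ, hδa⟩ := exists_between ha
    have hδ : 0 < δ := (le_max_right c 0).trans_lt hcδ
    obtain ⟨N, hN⟩ := eventually_atTop.1
      (h.eventually (gt_mem_nhds ((le_max_left c 0).trans_lt hcδ)))
    have hC : Tendsto (fun k : ℕ => partialSups b N / k) atTop (𝓝 0) :=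
      tendsto_const_div_atTop_nhds_zero_nat _
    filter_upwards [hC.eventually (gt_mem_nhds (sub_pos.2 hδa)), eventually_gt_atTop N]
      with k hCk hNk
    have hk : (0 : ℝ) < k := by exact_mod_cast (Nat.zero_le N).trans_lt hNk
    have hbound : partialSups b k ≤ partialSups b N + δ * k := by
      refine partialSups_le _ _ _ fun j hj => ?_
      rcases le_total j N with hjN | hNj
      · have : (0 : ℝ) ≤ δ * k := by positivity
        linarith [le_partialSups_of_le b hjN]
      · have hb : b j ≤ δ * j := by
          rcases Nat.eq_zero_or_pos j with rfl | hj0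
          · simp [h0]
          · exact ((div_lt_iff₀ (by exact_mod_cast hj0)).1 (hN j hNj)).le
        have : δ * j ≤ δ * k := by gcongr
        have : 0 ≤ partialSups b N := h0 ▸ le_partialSups_of_le b (Nat.zero_le N)
        linarith
    calc partialSups b k / k ≤ partialSups b N / k + δ := by
          rw [div_add' _ _ _ hk.ne', div_le_div_iff_of_pos_right hk]; linarith
      _ < a := by linarith

theorem tendsto_lindley_div {ξ W : ℕ → ℝ} {m : ℝ} (h0 : W 0 = 0)
    (hrec : ∀ k, W (k + 1) = max 0 (W k + ξ (k + 1)))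
    (hS : Tendsto (fun k : ℕ => (∑ i ∈ range k, ξ (i + 1)) / k) atTop (𝓝 m)) :
    Tendsto (fun k : ℕ => W k / k) atTop (𝓝 (max m 0)) := by
  have hM := tendsto_partialSups_div (b := fun j => -∑ i ∈ range j, ξ (i + 1)) (by simp)
    (by simpa only [neg_div] using hS.neg)
  rw [show max m 0 = m + max (-m) 0 by rw [add_max]; simp [max_comm]]
  refine (hS.add hM).congr fun k => ?_
  rw [lindley_eq_add_partialSups ξ W h0 hrec k, add_div]

theorem tendsto_div_of_tendsto_sum_div {a : ℕ → ℝ} {m : ℝ}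
    (h : Tendsto (fun k : ℕ => (∑ i ∈ range k, a i) / k) atTop (𝓝 m)) :
    Tendsto (fun k : ℕ => a k / k) atTop (𝓝 0) := by
  have hratio : Tendsto (fun k : ℕ => (1 + 1 * k : ℝ) / (0 + 1 * k)) atTop (𝓝 (1 / 1)) :=
    tendsto_add_mul_div_add_mul_atTop_nhds 1 0 1 one_ne_zero
  have hnext := (((tendsto_add_atTop_iff_nat 1).2 h).mul hratio).sub h
  rw [div_one, mul_one, sub_self] at hnext
  refine hnext.congr' ?_
  filter_upwards [eventually_ne_atTop 0] with k hk
  have hk : (k : ℝ) ≠ 0 := by exact_mod_cast hk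
  rw [sum_range_succ]
  push_cast
  field_simp
  ring

theorem tendsto_of_tendsto_even_odd {α : Type*} {g : ℕ → α} {l : Filter α}
    (he : Tendsto (fun k => g (2 * k)) atTop l) (ho : Tendsto (fun k => g (2 * k + 1)) atTop l) :
    Tendsto g atTop l := by
  intro s hs
  obtain ⟨N₁, hN₁⟩ := eventually_atTop.1 (he hs)
  obtain ⟨N₂, hN₂⟩ := eventually_atTop.1 (ho hs)
  refine eventually_atTop.2 ⟨2 * max N₁ N₂, fun n hn => ?_⟩
  obtain ⟨k, rfl | rfl⟩ := Nat.even_or_odd' n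
  · exact hN₁ k (by omega)
  · exact hN₂ k (by omega)

theorem tendsto_div_of_interleave {Z W A : ℕ → ℝ} {L : ℝ}
    (he : ∀ k, Z (2 * k) = W k) (ho : ∀ k, Z (2 * k + 1) = W k + A k)
    (hW : Tendsto (fun k : ℕ => W k / k) atTop (𝓝 L))
    (hA : Tendsto (fun k : ℕ => A k / k) atTop (𝓝 0)) :
    Tendsto (fun n : ℕ => Z n / n) atTop (𝓝 (L / 2)) := by
  refine tendsto_of_tendsto_even_odd ((hW.div_const 2).congr fun k => ?_) ?_
  · rw [he, div_div, mul_comm]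
    push_cast
    rfl
  · have hratio : Tendsto (fun k : ℕ => (0 + 1 * k : ℝ) / (1 + 2 * k)) atTop (𝓝 (1 / 2)) :=
      tendsto_add_mul_div_add_mul_atTop_nhds 0 1 1 two_ne_zero
    have := (hW.add hA).mul hratio
    rw [add_zero, ← div_eq_mul_one_div] at this
    refine this.congr' ?_
    filter_upwards [eventually_ne_atTop 0] with k hk
    have hk : (k : ℝ) ≠ 0 := by exact_mod_cast hk
    rw [ho]
    push_cast
    field_simp
    ring

theorem tendsto_div_of_alternating_lindley {A B Z : ℕ → ℝ} {a m : ℝ} (h0 : Z 0 = 0)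
    (hodd : ∀ k, Z (2 * k + 1) = Z (2 * k) + A (k + 1))
    (heven : ∀ k, Z (2 * k + 2) = max 0 (Z (2 * k + 1) - B (k + 1)))
    (hA : Tendsto (fun k : ℕ => (∑ i ∈ range k, A (i + 1)) / k) atTop (𝓝 a))
    (hAB : Tendsto (fun k : ℕ => (∑ i ∈ range k, (A (i + 1) - B (i + 1))) / k) atTop (𝓝 m)) :
    Tendsto (fun n : ℕ => Z n / n) atTop (𝓝 (max m 0 / 2)) := by
  have hrec (k : ℕ) : Z (2 * (k + 1)) = max 0 (Z (2 * k) + (A (k + 1) - B (k + 1))) := by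
    rw [mul_add_one, heven, hodd, add_sub_assoc]
  exact tendsto_div_of_interleave (W := fun k => Z (2 * k)) (A := fun k => A (k + 1))
    (fun _ => rfl) hodd (tendsto_lindley_div (ξ := fun i => A i - B i) (by simpa using h0) hrec hAB)
    (tendsto_div_of_tendsto_sum_div hA)

theorem ProbabilityTheory.iIndepFun.indepFun_of_measurable_iSup {ι Ω γ δ : Type*}
    {mΩ : MeasurableSpace Ω} {μ : Measure Ω} {β : ι → Type*} {m : ∀ i, MeasurableSpace (β i)}
    {f : ∀ i, Ω → β i} [MeasurableSpace γ] [MeasurableSpace δ] (h : iIndepFun f μ)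
    (hf : ∀ i, Measurable (f i)) {S T : Set ι} (hST : Disjoint S T) {φ : Ω → γ} {ψ : Ω → δ}
    (hφ : Measurable[⨆ i ∈ S, (m i).comap (f i)] φ)
    (hψ : Measurable[⨆ i ∈ T, (m i).comap (f i)] ψ) :
    IndepFun φ ψ μ := by
  rw [IndepFun_iff_Indep]
  exact indep_of_indep_of_le_right (indep_of_indep_of_le_left
    (indep_iSup_of_disjoint (fun i => (hf i).comap_le) h.iIndep hST) hφ.comap_le) hψ.comap_le

theorem measurable_iSup_comap {ι Ω : Type*} {β : ι → Type*} {m : ∀ i, MeasurableSpace (β i)}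
    (f : ∀ i, Ω → β i) {S : Set ι} {j : ι} (hj : j ∈ S) :
    Measurable[⨆ i ∈ S, (m i).comap (f i)] (f j) :=
  (comap_measurable (f j)).mono (le_iSup₂ (f := fun i _ => (m i).comap (f i)) j hj) le_rfl

noncomputable def countLe (f : ℝ) (x : ℕ) (u : ℕ → ℝ) : ℕ :=
  ((range x).filter (fun i => u i ≤ f)).card

theorem countLe_le (f : ℝ) (x : ℕ) (u : ℕ → ℝ) : countLe f x u ≤ x :=
  (card_filter_le _ _).trans (card_range x).le

theorem measurable_countLe (f : ℝ) :
    Measurable fun z : ℕ × (ℕ → ℝ) => countLe f z.1 z.2 := by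
  refine measurable_from_prod_countable_right fun x => ?_
  simp only [countLe, card_filter]
  exact Finset.measurable_sum _ fun i _ =>
    Measurable.ite (measurable_pi_apply i measurableSet_Iic) measurable_const measurable_const

theorem integral_countLe_infinitePi (μ : Measure ℝ) [IsProbabilityMeasure μ] (f : ℝ) (x : ℕ) :
    ∫ u, (countLe f x u : ℝ) ∂(Measure.infinitePi fun _ : ℕ => μ) = x * μ.real (Set.Iic f) := by
  have hcoord (i : ℕ) : ∫ u, (Set.Iic f).indicator (1 : ℝ → ℝ) (u i)
      ∂(Measure.infinitePi fun _ : ℕ => μ) = μ.real (Set.Iic f) := by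
    rw [← integral_map (measurable_pi_apply i).aemeasurable
      ((measurable_one.indicator measurableSet_Iic).aestronglyMeasurable),
      Measure.infinitePi_map_eval, integral_indicator_one measurableSet_Iic]
  have hsum (u : ℕ → ℝ) : (countLe f x u : ℝ) =
      ∑ i ∈ range x, (Set.Iic f).indicator (1 : ℝ → ℝ) (u i) := by
    simp only [countLe, card_filter, Nat.cast_sum, Nat.cast_ite, Nat.cast_one, Nat.cast_zero,
      Set.indicator_apply, Set.mem_Iic, Pi.one_apply]
  simp_rw [hsum]
  rw [integral_finsetSum _ fun i _ => ?_]
  · simp [hcoord]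
  · exact (integrable_const 1).indicator (measurable_pi_apply i measurableSet_Iic)

structure IsFitnessModel {Ω : Type*} [MeasurableSpace Ω] (P : Measure Ω) (μ : Measure ℝ)
    (X Y : ℕ → Ω → ℕ) (U : ℕ → ℕ → Ω → ℝ) : Prop where
  measurable_X : ∀ n, Measurable (X n)
  measurable_Y : ∀ n, Measurable (Y n)
  measurable_U : ∀ n i, Measurable (U n i)
  indep : iIndepFun (m := fitnessModelSpace) (fitnessModelFam X Y U) P
  identDistrib : ∀ n, IdentDistrib (fun ω => (X n ω, Y n ω)) (fun ω => (X 0 ω, Y 0 ω)) P P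
  map_U : ∀ n i, P.map (U n i) = μ

namespace IsFitnessModel

variable {Ω : Type*} {X Y : ℕ → Ω → ℕ} {U : ℕ → ℕ → Ω → ℝ}

def stage (X Y : ℕ → Ω → ℕ) (U : ℕ → ℕ → Ω → ℝ) (n : ℕ) (ω : Ω) : (ℕ × ℕ) × (ℕ → ℝ) :=
  ((X n ω, Y n ω), fun i => U n i ω)

theorem measurable_iSup_pair {S : Set (ℕ ⊕ ℕ × ℕ)} {n : ℕ} (hn : .inl n ∈ S) :
    Measurable[⨆ j ∈ S, (fitnessModelSpace j).comap (fitnessModelFam X Y U j)]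
      (fun ω => (X n ω, Y n ω)) :=
  measurable_iSup_comap (fitnessModelFam X Y U) hn

theorem measurable_iSup_U {S : Set (ℕ ⊕ ℕ × ℕ)} {n : ℕ} (hn : ∀ i, .inr (n, i) ∈ S) :
    Measurable[⨆ j ∈ S, (fitnessModelSpace j).comap (fitnessModelFam X Y U j)]
      (fun ω i => U n i ω) :=
  @measurable_pi_lambda _ _ (fun _ => ℝ) (_) _ _ fun i =>
    measurable_iSup_comap (fitnessModelFam X Y U) (hn i)

variable [MeasurableSpace Ω] {P : Measure Ω} {μ : Measure ℝ}

theorem measurable_fitnessModelFam (hM : IsFitnessModel P μ X Y U) (j : ℕ ⊕ ℕ × ℕ) :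
    Measurable[_, fitnessModelSpace j] (fitnessModelFam X Y U j) := by
  cases j with
  | inl n => exact (hM.measurable_X n).prodMk (hM.measurable_Y n)
  | inr q => exact hM.measurable_U q.1 q.2

theorem measurable_stage (hM : IsFitnessModel P μ X Y U) (n : ℕ) : Measurable (stage X Y U n) :=
  ((hM.measurable_X n).prodMk (hM.measurable_Y n)).prodMk
    (measurable_pi_lambda _ (hM.measurable_U n))

theorem indepFun_stage (hM : IsFitnessModel P μ X Y U) {n n' : ℕ} (hn : n ≠ n') :
    IndepFun (stage X Y U n) (stage X Y U n') P := by
  let block (n : ℕ) : Set (ℕ ⊕ ℕ × ℕ) := Sum.elim id Prod.fst ⁻¹' {n}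
  have hblock (n : ℕ) : Measurable[⨆ j ∈ block n,
      (fitnessModelSpace j).comap (fitnessModelFam X Y U j)] (stage X Y U n) :=
    (measurable_iSup_pair (show .inl n ∈ block n from rfl)).prodMk
      (measurable_iSup_U fun i => (show .inr (n, i) ∈ block n from rfl))
  refine hM.indep.indepFun_of_measurable_iSup hM.measurable_fitnessModelFam ?_
    (hblock n) (hblock n')
  exact Set.disjoint_iff_forall_ne.2 fun j hj j' hj' h => hn (by simp_all [block])

theorem map_stage (hM : IsFitnessModel P μ X Y U) [IsProbabilityMeasure P] (n : ℕ) :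
    P.map (stage X Y U n) =
      (P.map fun ω => (X n ω, Y n ω)).prod (Measure.infinitePi fun _ : ℕ => μ) := by
  have hindep : IndepFun (fun ω => (X n ω, Y n ω)) (fun ω i => U n i ω) P :=
    hM.indep.indepFun_of_measurable_iSup hM.measurable_fitnessModelFam
      (S := {.inl n}) (T := Set.range fun i => .inr (n, i)) (by simp)
      (measurable_iSup_pair rfl) (measurable_iSup_U fun i => ⟨i, rfl⟩)
  have hU : P.map (fun ω i => U n i ω) = Measure.infinitePi fun _ : ℕ => μ := by
    have hUindep : iIndepFun (fun i => U n i) P :=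
      hM.indep.precomp (g := fun i => Sum.inr (n, i)) fun i i' h => by simpa using h
    rw [hUindep.map_fun_eq_infinitePi_map (hM.measurable_U n)]
    simp_rw [hM.map_U]
  rw [← hU, ← (indepFun_iff_map_prod_eq_prod_map_map
    ((hM.measurable_X n).prodMk (hM.measurable_Y n)).aemeasurable
    (measurable_pi_lambda _ (hM.measurable_U n)).aemeasurable).1 hindep]
  rfl

theorem identDistrib_stage (hM : IsFitnessModel P μ X Y U) [IsProbabilityMeasure P] (n : ℕ) :
    IdentDistrib (stage X Y U n) (stage X Y U 0) P P where
  aemeasurable_fst := (hM.measurable_stage n).aemeasurable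
  aemeasurable_snd := (hM.measurable_stage 0).aemeasurable
  map_eq := by rw [hM.map_stage, hM.map_stage, (hM.identDistrib n).map_eq]

theorem ae_tendsto_sum_stage_div (hM : IsFitnessModel P μ X Y U) [IsProbabilityMeasure P]
    {g : (ℕ × ℕ) × (ℕ → ℝ) → ℝ} (hg : Measurable g)
    (hint : Integrable (fun ω => g (stage X Y U 0 ω)) P) :
    ∀ᵐ ω ∂P, Tendsto (fun k : ℕ => (∑ i ∈ range k, g (stage X Y U (i + 1) ω)) / k) atTop
      (𝓝 (∫ ω, g (stage X Y U 0 ω) ∂P)) := by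
  have hid (n : ℕ) := (hM.identDistrib_stage n).comp hg
  have := strong_law_ae_real (fun i ω => g (stage X Y U (i + 1) ω))
    ((hid 1).integrable_iff.2 hint)
    (fun i j hij => (hM.indepFun_stage (by omega)).comp hg hg)
    (fun i => (hid (i + 1)).trans (hid 1).symm)
  have hmean : ∫ ω, g (stage X Y U 1 ω) ∂P = ∫ ω, g (stage X Y U 0 ω) ∂P := (hid 1).integral_eq
  simpa only [zero_add, hmean] using this

theorem integrable_countLe (hM : IsFitnessModel P μ X Y U)
    (hX : Integrable (fun ω => (X 0 ω : ℝ)) P) (f : ℝ) :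
    Integrable (fun ω => (countLe f (X 0 ω) (fun i => U 0 i ω) : ℝ)) P :=
  hX.mono' (measurable_from_nat.comp ((measurable_countLe f).comp ((hM.measurable_X 0).prodMk
      (measurable_pi_lambda _ (hM.measurable_U 0))))).aestronglyMeasurable
    (ae_of_all _ fun ω => by simpa using countLe_le f (X 0 ω) _)

theorem integral_countLe (hM : IsFitnessModel P μ X Y U) [IsProbabilityMeasure P]
    [IsProbabilityMeasure μ] (hX : Integrable (fun ω => (X 0 ω : ℝ)) P) (f : ℝ) :
    ∫ ω, (countLe f (X 0 ω) (fun i => U 0 i ω) : ℝ) ∂P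
      = μ.real (Set.Iic f) * ∫ ω, (X 0 ω : ℝ) ∂P := by
  let G : (ℕ × ℕ) × (ℕ → ℝ) → ℝ := fun z => countLe f z.1.1 z.2
  have hG : Measurable G := measurable_from_nat.comp
    ((measurable_countLe f).comp (measurable_fst.fst.prodMk measurable_snd))
  have hpair : Measurable fun ω => (X 0 ω, Y 0 ω) := (hM.measurable_X 0).prodMk (hM.measurable_Y 0)
  have hGint : Integrable G
      ((P.map fun ω => (X 0 ω, Y 0 ω)).prod (Measure.infinitePi fun _ : ℕ => μ)) := by
    rw [← hM.map_stage 0]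
    exact (integrable_map_measure hG.aestronglyMeasurable (hM.measurable_stage 0).aemeasurable).2
      (hM.integrable_countLe hX f)
  calc ∫ ω, G (stage X Y U 0 ω) ∂P
      = ∫ z, G z ∂((P.map fun ω => (X 0 ω, Y 0 ω)).prod (Measure.infinitePi fun _ : ℕ => μ)) := by
        rw [← hM.map_stage 0,
          integral_map (hM.measurable_stage 0).aemeasurable hG.aestronglyMeasurable]
    _ = ∫ a, (a.1 : ℝ) * μ.real (Set.Iic f) ∂(P.map fun ω => (X 0 ω, Y 0 ω)) := by
        simp only [integral_prod _ hGint, G, integral_countLe_infinitePi]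
    _ = μ.real (Set.Iic f) * ∫ ω, (X 0 ω : ℝ) ∂P := by
        rw [integral_mul_const, mul_comm, integral_map hpair.aemeasurable
          (f := fun a : ℕ × ℕ => (a.1 : ℝ)) Measurable.of_discrete.aestronglyMeasurable]

theorem ae_tendsto_div_of_alternating_lindley (hM : IsFitnessModel P μ X Y U)
    [IsProbabilityMeasure P] {g h : (ℕ × ℕ) × (ℕ → ℝ) → ℕ} (hg : Measurable g)
    (hh : Measurable h) (hgi : Integrable (fun ω => (g (stage X Y U 0 ω) : ℝ)) P)
    (hhi : Integrable (fun ω => (h (stage X Y U 0 ω) : ℝ)) P)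
    (Z : ℕ → Ω → ℤ) (h0 : ∀ ω, Z 0 ω = 0)
    (hodd : ∀ k ω, Z (2 * k + 1) ω = Z (2 * k) ω + (g (stage X Y U (k + 1) ω) : ℤ))
    (heven : ∀ k ω,
      Z (2 * k + 2) ω = max 0 (Z (2 * k + 1) ω - (h (stage X Y U (k + 1) ω) : ℤ))) :
    ∀ᵐ ω ∂P, Tendsto (fun n : ℕ => (Z n ω : ℝ) / n) atTop
      (𝓝 (max (∫ ω, (g (stage X Y U 0 ω) : ℝ) ∂P - ∫ ω, (h (stage X Y U 0 ω) : ℝ) ∂P) 0 / 2)) := by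
  have hg' : Measurable fun z => (g z : ℝ) := measurable_from_nat.comp hg
  have hh' : Measurable fun z => (h z : ℝ) := measurable_from_nat.comp hh
  have hA := hM.ae_tendsto_sum_stage_div hg' hgi
  have hAB := hM.ae_tendsto_sum_stage_div (g := fun z => (g z : ℝ) - h z) (hg'.sub hh')
    (hgi.sub hhi)
  filter_upwards [hA, hAB] with ω hAω hABω
  rw [integral_sub hgi hhi] at hABω
  refine tendsto_div_of_alternating_lindley (Z := fun n => (Z n ω : ℝ))
    (A := fun n => (g (stage X Y U n ω) : ℝ)) (B := fun n => (h (stage X Y U n ω) : ℝ))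
    (by simp [h0]) (fun k => ?_) (fun k => ?_) hAω hABω
  · simp [hodd]
  · simp [heven]

end IsFitnessModel

theorem stmt19_general
    {Ω : Type*} [MeasurableSpace Ω] (P : Measure Ω) [IsProbabilityMeasure P]
    (μ : Measure ℝ) [IsProbabilityMeasure μ]
    (X Y : ℕ → Ω → ℕ) (U : ℕ → ℕ → Ω → ℝ)
    (hXm : ∀ n, Measurable (X n)) (hYm : ∀ n, Measurable (Y n))
    (hUm : ∀ n i, Measurable (U n i))
    -- the pairs (Xₙ, Yₙ) and all fitness values Uₙᵢ are jointly independent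
    (hindep : iIndepFun (m := fitnessModelSpace) (fitnessModelFam X Y U) P)
    -- the pairs (Xₙ, Yₙ) are identically distributed
    (hid : ∀ n, IdentDistrib (fun ω => (X n ω, Y n ω)) (fun ω => (X 0 ω, Y 0 ω)) P P)
    -- every fitness value has law μ
    (hU : ∀ n i, P.map (U n i) = μ)
    -- E[X - Y] ∈ (0, ∞)
    (hXint : Integrable (fun ω => (X 0 ω : ℝ)) P)
    (hYint : Integrable (fun ω => (Y 0 ω : ℝ)) P)
    (hXY : 0 < ∫ ω, (X 0 ω : ℝ) ∂P - ∫ ω, (Y 0 ω : ℝ) ∂P)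
    -- Zₜₒₜ n = total number of living species at time n
    (Ztot : ℕ → Ω → ℤ)
    (hZtot0 : ∀ ω, Ztot 0 ω = 0)
    (hZtotodd : ∀ k ω, Ztot (2 * k + 1) ω = Ztot (2 * k) ω + (X (k + 1) ω : ℤ))
    (hZtoteven : ∀ k ω, Ztot (2 * k + 2) ω = max 0 (Ztot (2 * k + 1) ω - (Y (k + 1) ω : ℤ)))
    -- number of species created at stage n with fitness ≤ f
    (Xt : ℝ → ℕ → Ω → ℕ)
    (hXt : ∀ f n ω, Xt f n ω = ((Finset.range (X n ω)).filter (fun i => U n i ω ≤ f)).card)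
    -- ZI f n = Z_n([0,f]), the number of living species with fitness in [0,f] at time n
    (ZI : ℝ → ℕ → Ω → ℤ)
    (hZI0 : ∀ f ω, ZI f 0 ω = 0)
    (hZIodd : ∀ f k ω, ZI f (2 * k + 1) ω = ZI f (2 * k) ω + (Xt f (k + 1) ω : ℤ))
    (hZIeven : ∀ f k ω,
      ZI f (2 * k + 2) ω = max 0 (ZI f (2 * k + 1) ω - (Y (k + 1) ω : ℤ))) :
    (∀ᵐ ω ∂P, Tendsto (fun n : ℕ => (Ztot n ω : ℝ) / n) atTop
        (nhds ((∫ ω, (X 0 ω : ℝ) ∂P - ∫ ω, (Y 0 ω : ℝ) ∂P) / 2))) ∧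
      ∀ f : ℝ, ∀ᵐ ω ∂P, Tendsto (fun n : ℕ => (ZI f n ω : ℝ) / n) atTop
        (nhds (max ((μ (Set.Iic f)).toReal * ∫ ω, (X 0 ω : ℝ) ∂P
          - ∫ ω, (Y 0 ω : ℝ) ∂P) 0 / 2)) := by
  have hM : IsFitnessModel P μ X Y U := ⟨hXm, hYm, hUm, hindep, hid, hU⟩
  refine ⟨?_, fun f => ?_⟩
  · have := hM.ae_tendsto_div_of_alternating_lindley (g := fun z => z.1.1) (h := fun z => z.1.2)
      measurable_fst.fst measurable_fst.snd hXint hYint Ztot hZtot0 hZtotodd hZtoteven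
    simpa only [IsFitnessModel.stage, max_eq_left hXY.le] using this
  · have := hM.ae_tendsto_div_of_alternating_lindley (g := fun z => countLe f z.1.1 z.2)
      (h := fun z => z.1.2) ((measurable_countLe f).comp (measurable_fst.fst.prodMk measurable_snd))
      measurable_fst.snd (hM.integrable_countLe hXint f) hYint (ZI f) (hZI0 f)
      (fun k ω => by rw [hZIodd, hXt]; rfl) (hZIeven f)
    simpa only [IsFitnessModel.stage, hM.integral_countLe hXint f, measureReal_def] using this

/-- In the fitness model with `E[X - Y] ∈ (0, ∞)`: almost surely `Zₙ/n → E[X - Y]/2`, and for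
every left interval `I = [0, f]`, almost surely `Zₙ(I)/n → max(E[μ(I)X - Y], 0)/2`. -/
theorem stmt19
    {Ω : Type*} [MeasurableSpace Ω] (P : Measure Ω) [IsProbabilityMeasure P]
    (μ : Measure ℝ) [IsProbabilityMeasure μ] (hμsupp : μ (Set.Icc (0 : ℝ) 1) = 1)
    (X Y : ℕ → Ω → ℕ) (U : ℕ → ℕ → Ω → ℝ)
    (hXm : ∀ n, Measurable (X n)) (hYm : ∀ n, Measurable (Y n))
    (hUm : ∀ n i, Measurable (U n i))
    -- the pairs (Xₙ, Yₙ) and all fitness values Uₙᵢ are jointly independent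
    (hindep : iIndepFun (m := fitnessModelSpace) (fitnessModelFam X Y U) P)
    -- the pairs (Xₙ, Yₙ) are identically distributed
    (hid : ∀ n, IdentDistrib (fun ω => (X n ω, Y n ω)) (fun ω => (X 0 ω, Y 0 ω)) P P)
    -- every fitness value has law μ
    (hU : ∀ n i, P.map (U n i) = μ)
    -- E[X - Y] ∈ (0, ∞)
    (hXint : Integrable (fun ω => (X 0 ω : ℝ)) P)
    (hYint : Integrable (fun ω => (Y 0 ω : ℝ)) P)
    (hXY : 0 < ∫ ω, (X 0 ω : ℝ) ∂P - ∫ ω, (Y 0 ω : ℝ) ∂P)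
    -- Zₜₒₜ n = total number of living species at time n
    (Ztot : ℕ → Ω → ℤ)
    (hZtot0 : ∀ ω, Ztot 0 ω = 0)
    (hZtotodd : ∀ k ω, Ztot (2 * k + 1) ω = Ztot (2 * k) ω + (X (k + 1) ω : ℤ))
    (hZtoteven : ∀ k ω, Ztot (2 * k + 2) ω = max 0 (Ztot (2 * k + 1) ω - (Y (k + 1) ω : ℤ)))
    -- number of species created at stage n with fitness ≤ f
    (Xt : ℝ → ℕ → Ω → ℕ)
    (hXt : ∀ f n ω, Xt f n ω = ((Finset.range (X n ω)).filter (fun i => U n i ω ≤ f)).card)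
    -- ZI f n = Z_n([0,f]), the number of living species with fitness in [0,f] at time n
    (ZI : ℝ → ℕ → Ω → ℤ)
    (hZI0 : ∀ f ω, ZI f 0 ω = 0)
    (hZIodd : ∀ f k ω, ZI f (2 * k + 1) ω = ZI f (2 * k) ω + (Xt f (k + 1) ω : ℤ))
    (hZIeven : ∀ f k ω,
      ZI f (2 * k + 2) ω = max 0 (ZI f (2 * k + 1) ω - (Y (k + 1) ω : ℤ))) :
    (∀ᵐ ω ∂P, Tendsto (fun n : ℕ => (Ztot n ω : ℝ) / n) atTop
        (nhds ((∫ ω, (X 0 ω : ℝ) ∂P - ∫ ω, (Y 0 ω : ℝ) ∂P) / 2))) ∧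
      ∀ f : ℝ, ∀ᵐ ω ∂P, Tendsto (fun n : ℕ => (ZI f n ω : ℝ) / n) atTop
        (nhds (max ((μ (Set.Iic f)).toReal * ∫ ω, (X 0 ω : ℝ) ∂P
          - ∫ ω, (Y 0 ω : ℝ) ∂P) 0 / 2)) :=
  stmt19_general P μ X Y U hXm hYm hUm hindep hid hU hXint hYint hXY Ztot hZtot0 hZtotodd hZtoteven
    Xt hXt ZI hZI0 hZIodd hZIeven
end
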